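/- arXiv:1804.01950 — 2 statements merged into one kernel-verified Lean document; each statement's English description precedes it below -/
import Mathlib

section
/- Let G be an r×n matrix over F₂ and K ≥ 0 a real number. Then for every error vector e ∈ F₂ⁿ one has Z_e(G;K) ≤ Z_0(G;K), where 0 denotes the zero vector. -/
open Matrix Filter

/-- Partition function `Z_e(G;K)` of the random-bond Ising model in Wegner's form. -/
noncomputable def Zf {ρ : Type*} [Fintype ρ] [DecidableEq ρ] {n : ℕ}
    (G : Matrix ρ (Fin n) (ZMod 2)) (e : Fin n → ZMod 2) (K : ℝ) : ℝ :=
  ∑ α : ρ → ZMod 2,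
    Real.exp (K * ∑ b : Fin n, (-1 : ℝ) ^ ((e b).val + ((Matrix.vecMul α G) b).val))

/-- `Hs` is an adapted dual of `H`: it stacks `G` on top of `k` extra rows, and its
row space equals `C_H^⊥ = {c | H cᵀ = 0}`. -/
def IsAdaptedDual {rG rH k n : ℕ} (G : Matrix (Fin rG) (Fin n) (ZMod 2))
    (H : Matrix (Fin rH) (Fin n) (ZMod 2))
    (Hs : Matrix (Fin rG ⊕ Fin k) (Fin n) (ZMod 2)) : Prop :=
  (∀ i, Hs (Sum.inl i) = G i) ∧
  LinearMap.range Hs.vecMulLinear = LinearMap.ker H.mulVecLin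

/-- Homological difference `ΔF_e(G,H;K) = ln Z_e(H*;K) − ln Z_e(G;K)`. -/
noncomputable def deltaF {ρ ρ' : Type*} [Fintype ρ] [DecidableEq ρ] [Fintype ρ'] [DecidableEq ρ'] {n : ℕ}
    (G : Matrix ρ (Fin n) (ZMod 2)) (Hs : Matrix ρ' (Fin n) (ZMod 2))
    (e : Fin n → ZMod 2) (K : ℝ) : ℝ :=
  Real.log (Zf Hs e K) - Real.log (Zf G e K)

/-- Disorder average `[X_e]_p = Σ_e p^{|e|}(1−p)^{n−|e|} X_e`. -/
noncomputable def davg {n : ℕ} (p : ℝ) (X : (Fin n → ZMod 2) → ℝ) : ℝ :=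
  ∑ e : Fin n → ZMod 2, p ^ hammingNorm e * (1 - p) ^ (n - hammingNorm e) * X e

/-- Average success probability of maximum-likelihood decoding. -/
noncomputable def Psucc {ρ ρ' : Type*} [Fintype ρ] [DecidableEq ρ] [Fintype ρ'] [DecidableEq ρ'] {n : ℕ}
    (G : Matrix ρ (Fin n) (ZMod 2)) (Hs : Matrix ρ' (Fin n) (ZMod 2))
    (K p : ℝ) : ℝ :=
  davg p (fun e => Zf G e K / Zf Hs e K)

/-- CSS distance `d_G`: minimum Hamming weight of a vector `c` with `H cᵀ = 0`
that is not in the row space of `G`. -/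
noncomputable def dCSS {rG rH n : ℕ} (G : Matrix (Fin rG) (Fin n) (ZMod 2))
    (H : Matrix (Fin rH) (Fin n) (ZMod 2)) : ℕ :=
  sInf {w | ∃ c : Fin n → ZMod 2,
    H.mulVec c = 0 ∧ (¬ ∃ α, Matrix.vecMul α G = c) ∧ hammingNorm c = w}

/-!
Expanding each Boltzmann factor as `exp (K s) = cosh K + s sinh K` for `s = ±1` writes
`Z_e(G;K)` as a sum over subsets `t` of the columns of
`cosh K ^ (n - |t|) * sinh K ^ |t| * χ_t(e) * ∑_α χ_t(αG)`,
where `χ_t(v) = ∏_{b ∈ t} (-1)^{v_b}`.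
Since `α ↦ χ_t(αG)` is an additive character, its sum over `α` is `0` or `2^r`, hence
nonnegative. For `K ≥ 0` all coefficients are nonnegative, and `χ_t(e) ≤ 1 = χ_t(0)`.
-/

open Finset

lemma AddChar.sum_nonneg {A R : Type*} [AddGroup A] [Fintype A] [CommSemiring R] [PartialOrder R]
    [IsOrderedRing R] [IsDomain R] (ψ : AddChar A R) : 0 ≤ ∑ a, ψ a := by
  classical
  rw [AddChar.sum_eq_ite]
  split_ifs
  exacts [Nat.cast_nonneg _, le_rfl]

noncomputable def signChar : AddChar (ZMod 2) ℝ where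
  toFun x := (-1) ^ x.val
  map_zero_eq_one' := pow_zero _
  map_add_eq_mul' a b := by
    rw [ZMod.val_add, ← neg_one_pow_eq_pow_mod_two, pow_add]

lemma signChar_apply (x : ZMod 2) : signChar x = (-1) ^ x.val := rfl

lemma signChar_eq_one_or_neg_one (x : ZMod 2) : signChar x = 1 ∨ signChar x = -1 := by
  fin_cases x
  · exact Or.inl signChar.map_zero_eq_one
  · exact Or.inr (pow_one _)

lemma abs_signChar (x : ZMod 2) : |signChar x| = 1 := by
  rcases signChar_eq_one_or_neg_one x with h | h <;> simp [h]

lemma prod_signChar_le_one {ι : Type*} (s : Finset ι) (f : ι → ZMod 2) :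
    ∏ i ∈ s, signChar (f i) ≤ 1 :=
  calc ∏ i ∈ s, signChar (f i) ≤ |∏ i ∈ s, signChar (f i)| := le_abs_self _
    _ = 1 := by simp only [abs_prod, abs_signChar, prod_const_one]

lemma exp_mul_signChar (K : ℝ) (x : ZMod 2) :
    Real.exp (K * signChar x) = Real.cosh K + signChar x * Real.sinh K := by
  rcases signChar_eq_one_or_neg_one x with h | h
  · rw [h, mul_one, one_mul, Real.cosh_add_sinh]
  · rw [h, mul_neg_one, neg_one_mul, ← sub_eq_add_neg, Real.cosh_sub_sinh]

variable {ρ : Type*} [Fintype ρ] {n : ℕ}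

noncomputable def columnSignChar (G : Matrix ρ (Fin n) (ZMod 2)) (t : Finset (Fin n)) :
    AddChar (ρ → ZMod 2) ℝ :=
  ∑ b ∈ t, signChar.compAddMonoidHom
    ((Pi.evalAddMonoidHom (fun _ => ZMod 2) b).comp G.vecMulLinear.toAddMonoidHom)

lemma columnSignChar_apply (G : Matrix ρ (Fin n) (ZMod 2)) (t : Finset (Fin n))
    (α : ρ → ZMod 2) :
    columnSignChar G t α = ∏ b ∈ t, signChar (Matrix.vecMul α G b) := by
  simp [columnSignChar, AddChar.sum_apply]

lemma Zf_eq_sum_powerset [DecidableEq ρ] (G : Matrix ρ (Fin n) (ZMod 2)) (e : Fin n → ZMod 2)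
    (K : ℝ) :
    Zf G e K = ∑ t ∈ univ.powerset, Real.cosh K ^ #(univ \ t) * Real.sinh K ^ #t *
      (∏ b ∈ t, signChar (e b)) * ∑ α, columnSignChar G t α := by
  calc Zf G e K
      = ∑ α : ρ → ZMod 2, ∏ b,
          (Real.sinh K * (signChar (e b) * signChar (Matrix.vecMul α G b)) + Real.cosh K) := by
        refine sum_congr rfl fun α _ => ?_
        rw [mul_sum, Real.exp_sum]
        refine prod_congr rfl fun b _ => ?_
        rw [pow_add, ← signChar_apply, ← signChar_apply, ← AddChar.map_add_eq_mul,
          exp_mul_signChar, AddChar.map_add_eq_mul]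
        ring
    _ = ∑ α : ρ → ZMod 2, ∑ t ∈ univ.powerset, (∏ b ∈ t,
          Real.sinh K * (signChar (e b) * signChar (Matrix.vecMul α G b))) *
            ∏ _b ∈ univ \ t, Real.cosh K := by
        simp_rw [prod_add]
    _ = _ := by
        rw [sum_comm]
        refine sum_congr rfl fun t _ => ?_
        simp only [prod_mul_distrib, prod_const, columnSignChar_apply, mul_sum]
        exact sum_congr rfl fun α _ => by ring

/-- For `K ≥ 0`, the zero-error partition function dominates: `Z_e(G;K) ≤ Z_0(G;K)`. -/
theorem stmt1 {r n : ℕ} (G : Matrix (Fin r) (Fin n) (ZMod 2))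
    (K : ℝ) (hK : 0 ≤ K) (e : Fin n → ZMod 2) :
    Zf G e K ≤ Zf G 0 K := by
  rw [Zf_eq_sum_powerset, Zf_eq_sum_powerset]
  refine sum_le_sum fun t _ => ?_
  have hcoeff : 0 ≤ Real.cosh K ^ #(univ \ t) * Real.sinh K ^ #t :=
    mul_nonneg (pow_nonneg (Real.cosh_pos K).le _) (pow_nonneg (Real.sinh_nonneg_iff.mpr hK) _)
  simp only [Pi.zero_apply, AddChar.map_zero_eq_one, prod_const_one, mul_one]
  exact mul_le_mul_of_nonneg_right (mul_le_of_le_one_right hcoeff (prod_signChar_le_one t e))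
    (columnSignChar G t).sum_nonneg
end

section
/- Let (G,H) be a CSS pair with adapted dual H*, let K ≥ 0, and let e ∈ F₂ⁿ be any error vector. Then ΔF_e(G,H;K) ≥ ΔF_0(G,H;K); equivalently, Z_e(H*;K) · Z_0(G;K) ≥ Z_e(G;K) · Z_0(H*;K). -/
open Matrix Filter

noncomputable def sg (s : ZMod 2) : ℝ := (-1 : ℝ) ^ s.val

lemma zmod2_cases (a : ZMod 2) : a = 0 ∨ a = 1 := by revert a; decide

lemma sg_zero : sg 0 = 1 := by norm_num [sg]
lemma sg_one : sg 1 = -1 := by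
  have : (1 : ZMod 2).val = 1 := rfl
  simp [sg, this]

lemma sg_cases (a : ZMod 2) : sg a = 1 ∨ sg a = -1 := by
  rcases zmod2_cases a with h | h <;> subst h <;> simp [sg_zero, sg_one]

lemma sg_add (a b : ZMod 2) : sg (a + b) = sg a * sg b := by
  have h2 : (1 + 1 : ZMod 2) = 0 := by decide
  rcases zmod2_cases a with h | h <;> rcases zmod2_cases b with h' | h' <;>
    subst h <;> subst h' <;> simp [sg_zero, sg_one, h2]

lemma neg_one_pow_val_add (a b : ZMod 2) :
    ((-1 : ℝ)) ^ (a.val + b.val) = sg (a + b) := by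
  have h1 : (1 : ZMod 2).val = 1 := rfl
  have h0 : (0 : ZMod 2).val = 0 := rfl
  have h2 : (1 + 1 : ZMod 2) = 0 := by decide
  rcases zmod2_cases a with h | h <;> rcases zmod2_cases b with h' | h' <;>
    subst h <;> subst h' <;> simp [sg_zero, sg_one, h2, h1, h0, pow_succ]

lemma sg_sum {ι : Type*} (s : Finset ι) (f : ι → ZMod 2) :
    sg (∑ i ∈ s, f i) = ∏ i ∈ s, sg (f i) := by
  induction s using Finset.cons_induction with
  | empty => simp [sg_zero]
  | cons a s ha ih => simp [Finset.sum_cons, Finset.prod_cons, sg_add, ih]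

lemma sum_zmod2 (f : ZMod 2 → ℝ) : ∑ s : ZMod 2, f s = f 0 + f 1 := by
  have : (Finset.univ : Finset (ZMod 2)) = {0, 1} := by decide
  rw [this, Finset.sum_insert (by decide), Finset.sum_singleton]

lemma prod_sum_fn {ι : Type*} [Fintype ι] [DecidableEq ι] (f : ι → ZMod 2 → ℝ) :
    ∏ i, (f i 0 + f i 1) = ∑ z : ι → ZMod 2, ∏ i, f i (z i) := by
  rw [← Fintype.prod_sum]
  exact Finset.prod_congr rfl fun i _ => (sum_zmod2 (f i)).symm

lemma char_sum {ι : Type*} [Fintype ι] [DecidableEq ι] (v : ι → ZMod 2) :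
    ∑ α : ι → ZMod 2, ∏ i, sg (α i * v i) = ∏ i, (1 + sg (v i)) := by
  calc ∑ α : ι → ZMod 2, ∏ i, sg (α i * v i)
      = ∏ i, (sg (0 * v i) + sg (1 * v i)) := (prod_sum_fn (fun i s => sg (s * v i))).symm
    _ = ∏ i, (1 + sg (v i)) := by simp [sg_zero]

lemma prod_sg_vecMul {ρ : Type*} [Fintype ρ] {n : ℕ} (M : Matrix ρ (Fin n) (ZMod 2))
    (α : ρ → ZMod 2) (z : Fin n → ZMod 2) :
    ∏ b, sg (Matrix.vecMul α M b * z b) = ∏ i, sg (α i * M.mulVec z i) := by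
  rw [← sg_sum, ← sg_sum]
  congr 1
  have h1 : ∑ b, Matrix.vecMul α M b * z b = Matrix.vecMul α M ⬝ᵥ z := rfl
  rw [h1, ← Matrix.dotProduct_mulVec]
  rfl

/-- Weight factor. -/
noncomputable def Wf (x : ℝ) {n : ℕ} (z : Fin n → ZMod 2) : ℝ := ∏ b, (1 + sg (z b) * x)
/-- Character. -/
noncomputable def Xf {n : ℕ} (e z : Fin n → ZMod 2) : ℝ := ∏ b, sg (e b * z b)
/-- Kernel indicator (times `2^r`). -/
noncomputable def Tf {ρ : Type*} [Fintype ρ] {n : ℕ} (M : Matrix ρ (Fin n) (ZMod 2))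
    (z : Fin n → ZMod 2) : ℝ := ∏ i, (1 + sg (M.mulVec z i))

lemma point_exp (K x : ℝ) (hx : x = Real.exp (-(2*K))) (c : ZMod 2) :
    Real.exp (K * sg c) =
      (Real.exp K / 2) * ((1 + sg 0 * x) * sg (c * 0) + (1 + sg 1 * x) * sg (c * 1)) := by
  have h00 : (0 : ZMod 2) * 0 = 0 := by decide
  have h01 : (0 : ZMod 2) * 1 = 0 := by decide
  have h10 : (1 : ZMod 2) * 0 = 0 := by decide
  have h11 : (1 : ZMod 2) * 1 = 1 := by decide
  rcases zmod2_cases c with h | h <;> subst h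
  · rw [h00, h01, sg_zero, sg_one]
    simp; ring
  · rw [h10, h11, sg_zero, sg_one, hx]
    have hE : Real.exp (K * (-1 : ℝ)) = Real.exp K * Real.exp (-(2*K)) := by
      rw [← Real.exp_add]; ring_nf
    rw [hE]; ring

lemma ZfExpand {ρ : Type*} [Fintype ρ] [DecidableEq ρ] {n : ℕ}
    (M : Matrix ρ (Fin n) (ZMod 2)) (e : Fin n → ZMod 2) (K x : ℝ)
    (hx : x = Real.exp (-(2*K))) :
    Zf M e K = (Real.exp K / 2) ^ n *
      ∑ z : Fin n → ZMod 2,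
        (∏ b, ((1 + sg (z b) * x) * sg (e b * z b))) * ∏ i, (1 + sg (M.mulVec z i)) := by
  have step1 : ∀ α : ρ → ZMod 2,
      Real.exp (K * ∑ b : Fin n, (-1 : ℝ) ^ ((e b).val + ((Matrix.vecMul α M) b).val))
      = ∏ b : Fin n, Real.exp (K * sg (e b + Matrix.vecMul α M b)) := by
    intro α
    rw [Finset.mul_sum, Real.exp_sum]
    exact Finset.prod_congr rfl fun b _ => by rw [neg_one_pow_val_add]
  unfold Zf
  simp_rw [step1]
  have step2 : ∀ α : ρ → ZMod 2,
      (∏ b : Fin n, Real.exp (K * sg (e b + Matrix.vecMul α M b)))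
      = (Real.exp K / 2) ^ n * ∑ z : Fin n → ZMod 2,
          ∏ b, ((1 + sg (z b) * x) * sg ((e b + Matrix.vecMul α M b) * z b)) := by
    intro α
    calc (∏ b : Fin n, Real.exp (K * sg (e b + Matrix.vecMul α M b)))
        = ∏ b : Fin n, ((Real.exp K / 2) *
            ((1 + sg 0 * x) * sg ((e b + Matrix.vecMul α M b) * 0)
              + (1 + sg 1 * x) * sg ((e b + Matrix.vecMul α M b) * 1))) := by
          exact Finset.prod_congr rfl fun b _ => point_exp K x hx _
      _ = (Real.exp K / 2) ^ n * ∏ b : Fin n,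
            ((1 + sg 0 * x) * sg ((e b + Matrix.vecMul α M b) * 0)
              + (1 + sg 1 * x) * sg ((e b + Matrix.vecMul α M b) * 1)) := by
          rw [Finset.prod_mul_distrib, Finset.prod_const, Finset.card_univ, Fintype.card_fin]
      _ = (Real.exp K / 2) ^ n * ∑ z : Fin n → ZMod 2,
            ∏ b, ((1 + sg (z b) * x) * sg ((e b + Matrix.vecMul α M b) * z b)) := by
          rw [prod_sum_fn (fun b s => (1 + sg s * x) * sg ((e b + Matrix.vecMul α M b) * s))]
  simp_rw [step2, ← Finset.mul_sum]
  congr 1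
  rw [Finset.sum_comm]
  refine Finset.sum_congr rfl fun z _ => ?_
  have split : ∀ α : ρ → ZMod 2,
      (∏ b, ((1 + sg (z b) * x) * sg ((e b + Matrix.vecMul α M b) * z b)))
      = (∏ b, ((1 + sg (z b) * x) * sg (e b * z b))) * ∏ i, sg (α i * M.mulVec z i) := by
    intro α
    have key : (∏ b, sg ((e b + Matrix.vecMul α M b) * z b))
        = (∏ b, sg (e b * z b)) * ∏ i, sg (α i * M.mulVec z i) := by
      have h1 : ∀ b, sg ((e b + Matrix.vecMul α M b) * z b)
          = sg (e b * z b) * sg (Matrix.vecMul α M b * z b) := by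
        intro b; rw [add_mul, sg_add]
      simp_rw [h1, Finset.prod_mul_distrib]
      rw [prod_sg_vecMul]
    calc (∏ b, ((1 + sg (z b) * x) * sg ((e b + Matrix.vecMul α M b) * z b)))
        = (∏ b, (1 + sg (z b) * x)) * ∏ b, sg ((e b + Matrix.vecMul α M b) * z b) :=
          Finset.prod_mul_distrib
      _ = (∏ b, (1 + sg (z b) * x)) * ((∏ b, sg (e b * z b)) * ∏ i, sg (α i * M.mulVec z i)) := by
          rw [key]
      _ = (∏ b, ((1 + sg (z b) * x) * sg (e b * z b))) * ∏ i, sg (α i * M.mulVec z i) := by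
          rw [Finset.prod_mul_distrib]; ring
  simp_rw [split]
  rw [← Finset.mul_sum, char_sum]

lemma ZfExpand' {ρ : Type*} [Fintype ρ] [DecidableEq ρ] {n : ℕ}
    (M : Matrix ρ (Fin n) (ZMod 2)) (e : Fin n → ZMod 2) (K x : ℝ)
    (hx : x = Real.exp (-(2*K))) :
    Zf M e K = (Real.exp K / 2) ^ n *
      ∑ z : Fin n → ZMod 2, Wf x z * Xf e z * Tf M z := by
  rw [ZfExpand M e K x hx]
  congr 1
  refine Finset.sum_congr rfl fun z _ => ?_
  rw [Wf, Xf, Tf, ← Finset.prod_mul_distrib]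

lemma Wf_nonneg {n : ℕ} (x : ℝ) (hx0 : 0 ≤ x) (hx1 : x ≤ 1) (z : Fin n → ZMod 2) :
    0 ≤ Wf x z := by
  refine Finset.prod_nonneg fun b _ => ?_
  rcases sg_cases (z b) with h | h <;> rw [h] <;> nlinarith

lemma Xf_cases {n : ℕ} (e z : Fin n → ZMod 2) : Xf e z = 1 ∨ Xf e z = -1 := by
  unfold Xf
  induction (Finset.univ : Finset (Fin n)) using Finset.cons_induction with
  | empty => simp
  | cons a s ha ih =>
    rw [Finset.prod_cons]
    rcases sg_cases (e a * z a) with h | h <;> rcases ih with h' | h' <;>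
      rw [h, h'] <;> norm_num

lemma Xf_add {n : ℕ} (e z v : Fin n → ZMod 2) : Xf e (z + v) = Xf e z * Xf e v := by
  unfold Xf
  rw [← Finset.prod_mul_distrib]
  refine Finset.prod_congr rfl fun b _ => ?_
  have : e b * (z + v) b = e b * z b + e b * v b := by
    rw [Pi.add_apply, mul_add]
  rw [this, sg_add]

lemma Tf_nonneg {ρ : Type*} [Fintype ρ] {n : ℕ} (M : Matrix ρ (Fin n) (ZMod 2))
    (z : Fin n → ZMod 2) : 0 ≤ Tf M z := by
  refine Finset.prod_nonneg fun i _ => ?_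
  rcases sg_cases (M.mulVec z i) with h | h <;> rw [h] <;> norm_num

lemma Tf_ne_zero {ρ : Type*} [Fintype ρ] {n : ℕ} (M : Matrix ρ (Fin n) (ZMod 2))
    (z : Fin n → ZMod 2) (h : Tf M z ≠ 0) : M.mulVec z = 0 := by
  funext i
  by_contra hi
  apply h
  refine Finset.prod_eq_zero (Finset.mem_univ i) ?_
  rcases zmod2_cases (M.mulVec z i) with h0 | h1
  · exact absurd h0 hi
  · rw [h1, sg_one]; norm_num

lemma Trep {ρ : Type*} [Fintype ρ] [DecidableEq ρ] {n : ℕ} (M : Matrix ρ (Fin n) (ZMod 2))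
    (z : Fin n → ZMod 2) :
    Tf M z = ∑ α : ρ → ZMod 2, ∏ b, sg (Matrix.vecMul α M b * z b) := by
  unfold Tf
  rw [← char_sum (M.mulVec z)]
  exact Finset.sum_congr rfl fun α _ => (prod_sg_vecMul M α z).symm

lemma coordNonneg (x : ℝ) (hx0 : 0 ≤ x) (hx1 : x ≤ 1) (vb eb ub : ZMod 2) :
    0 ≤ (1 + sg 0 * x) * (1 + sg (0 + vb) * x) * sg (eb * 0) * sg (ub * 0)
        + (1 + sg 1 * x) * (1 + sg (1 + vb) * x) * sg (eb * 1) * sg (ub * 1) := by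
  have h2 : (1 + 1 : ZMod 2) = 0 := by decide
  rcases zmod2_cases vb with h | h <;> rcases zmod2_cases eb with h' | h' <;>
    rcases zmod2_cases ub with h'' | h'' <;> subst h <;> subst h' <;> subst h'' <;>
    simp [sg_zero, sg_one, h2, mul_zero, mul_one, zero_add] <;> nlinarith

lemma Q_nonneg {ρ' : Type*} [Fintype ρ'] [DecidableEq ρ'] {n : ℕ}
    (Hs : Matrix ρ' (Fin n) (ZMod 2)) (x : ℝ) (hx0 : 0 ≤ x) (hx1 : x ≤ 1)
    (e v : Fin n → ZMod 2) :
    0 ≤ ∑ z : Fin n → ZMod 2, Wf x z * Wf x (z + v) * Xf e z * Tf Hs z := by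
  have rep : ∀ z : Fin n → ZMod 2,
      Wf x z * Wf x (z + v) * Xf e z * Tf Hs z
      = ∑ β : ρ' → ZMod 2, ∏ b,
          ((1 + sg (z b) * x) * (1 + sg (z b + v b) * x) * sg (e b * z b)
            * sg (Matrix.vecMul β Hs b * z b)) := by
    intro z
    rw [Trep, Finset.mul_sum]
    refine Finset.sum_congr rfl fun β _ => ?_
    rw [Wf, Wf, Xf]
    rw [← Finset.prod_mul_distrib, ← Finset.prod_mul_distrib, ← Finset.prod_mul_distrib]
    exact Finset.prod_congr rfl fun b _ => by rw [Pi.add_apply]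
  simp_rw [rep]
  rw [Finset.sum_comm]
  refine Finset.sum_nonneg fun β _ => ?_
  have := (prod_sum_fn (fun b s =>
    (1 + sg s * x) * (1 + sg (s + v b) * x) * sg (e b * s)
      * sg (Matrix.vecMul β Hs b * s))).symm
  rw [this]
  exact Finset.prod_nonneg fun b _ => coordNonneg x hx0 hx1 (v b) (e b) (Matrix.vecMul β Hs b)

lemma Xf_zero {n : ℕ} (z : Fin n → ZMod 2) : Xf 0 z = 1 := by
  unfold Xf
  simp [sg_zero]

lemma core {ρ ρ' : Type*} [Fintype ρ] [DecidableEq ρ] [Fintype ρ'] [DecidableEq ρ'] {n : ℕ}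
    (G : Matrix ρ (Fin n) (ZMod 2)) (Hs : Matrix ρ' (Fin n) (ZMod 2))
    (hsub : ∀ z : Fin n → ZMod 2, Hs.mulVec z = 0 → G.mulVec z = 0)
    (x : ℝ) (hx0 : 0 ≤ x) (hx1 : x ≤ 1) (e : Fin n → ZMod 2) :
    (∑ z : Fin n → ZMod 2, Wf x z * Xf e z * Tf G z)
        * (∑ v : Fin n → ZMod 2, Wf x v * Tf Hs v)
      ≤ (∑ z : Fin n → ZMod 2, Wf x z * Xf e z * Tf Hs z)
        * (∑ v : Fin n → ZMod 2, Wf x v * Tf G v) := by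
  rw [← sub_nonneg]
  have lhs : (∑ z : Fin n → ZMod 2, Wf x z * Xf e z * Tf Hs z)
      * (∑ v : Fin n → ZMod 2, Wf x v * Tf G v)
      = ∑ z : Fin n → ZMod 2, ∑ v : Fin n → ZMod 2,
          (Wf x z * Xf e z * Tf Hs z) * (Wf x v * Tf G v) :=
    Finset.sum_mul_sum _ _ _ _
  have swap : (∑ z : Fin n → ZMod 2, Wf x z * Xf e z * Tf G z)
      * (∑ v : Fin n → ZMod 2, Wf x v * Tf Hs v)
      = ∑ z : Fin n → ZMod 2, ∑ v : Fin n → ZMod 2,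
          (Wf x z * Tf Hs z) * (Wf x v * Xf e v * Tf G v) := by
    rw [Finset.sum_mul_sum, Finset.sum_comm]
    exact Finset.sum_congr rfl fun z _ => Finset.sum_congr rfl fun v _ => by ring
  rw [lhs, swap, ← Finset.sum_sub_distrib]
  have main : ∀ z : Fin n → ZMod 2,
      ((∑ v : Fin n → ZMod 2, (Wf x z * Xf e z * Tf Hs z) * (Wf x v * Tf G v))
        - ∑ v : Fin n → ZMod 2, (Wf x z * Tf Hs z) * (Wf x v * Xf e v * Tf G v))
      = ∑ v : Fin n → ZMod 2, (1 - Xf e v) * Tf G v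
          * (Wf x z * Wf x (z + v) * Xf e z * Tf Hs z) := by
    intro z
    rw [← Finset.sum_sub_distrib]
    calc ∑ v : Fin n → ZMod 2,
            ((Wf x z * Xf e z * Tf Hs z) * (Wf x v * Tf G v)
              - (Wf x z * Tf Hs z) * (Wf x v * Xf e v * Tf G v))
        = ∑ v : Fin n → ZMod 2,
            ((Wf x z * Xf e z * Tf Hs z) * (Wf x (z + v) * Tf G (z + v))
              - (Wf x z * Tf Hs z) * (Wf x (z + v) * Xf e (z + v) * Tf G (z + v))) :=
          (Fintype.sum_equiv (Equiv.addLeft z)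
            (fun v => (Wf x z * Xf e z * Tf Hs z) * (Wf x (z + v) * Tf G (z + v))
              - (Wf x z * Tf Hs z) * (Wf x (z + v) * Xf e (z + v) * Tf G (z + v)))
            (fun v => (Wf x z * Xf e z * Tf Hs z) * (Wf x v * Tf G v)
              - (Wf x z * Tf Hs z) * (Wf x v * Xf e v * Tf G v))
            (fun v => rfl)).symm
      _ = ∑ v : Fin n → ZMod 2, (1 - Xf e v) * Tf G v
            * (Wf x z * Wf x (z + v) * Xf e z * Tf Hs z) := by
          refine Finset.sum_congr rfl fun v _ => ?_
          by_cases hz : Tf Hs z = 0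
          · rw [hz]; ring
          · have hG : G.mulVec z = 0 := hsub z (Tf_ne_zero Hs z hz)
            have hTG : Tf G (z + v) = Tf G v := by
              unfold Tf
              rw [Matrix.mulVec_add, hG, zero_add]
            rw [hTG, Xf_add]; ring
  simp_rw [main]
  rw [Finset.sum_comm]
  refine Finset.sum_nonneg fun v _ => ?_
  rw [← Finset.mul_sum]
  refine mul_nonneg (mul_nonneg ?_ (Tf_nonneg G v)) (Q_nonneg Hs x hx0 hx1 e v)
  rcases Xf_cases e v with h | h <;> rw [h] <;> norm_num

lemma Zf_pos {ρ : Type*} [Fintype ρ] [DecidableEq ρ] {n : ℕ}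
    (M : Matrix ρ (Fin n) (ZMod 2)) (e : Fin n → ZMod 2) (K : ℝ) : 0 < Zf M e K :=
  Finset.sum_pos (fun _ _ => Real.exp_pos _) Finset.univ_nonempty


/-- Disorder increases the homological difference: `ΔF_e ≥ ΔF_0`, equivalently
`Z_e(H*;K)·Z_0(G;K) ≥ Z_e(G;K)·Z_0(H*;K)`. -/
theorem stmt3 {rG rH k n : ℕ} (G : Matrix (Fin rG) (Fin n) (ZMod 2))
    (H : Matrix (Fin rH) (Fin n) (ZMod 2)) (hGH : G * Hᵀ = 0)
    (hk : k = n - G.rank - H.rank)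
    (Hs : Matrix (Fin rG ⊕ Fin k) (Fin n) (ZMod 2))
    (hHs : IsAdaptedDual G H Hs) (K : ℝ) (hK : 0 ≤ K) (e : Fin n → ZMod 2) :
    deltaF G Hs e K ≥ deltaF G Hs 0 K ∧
      Zf Hs e K * Zf G 0 K ≥ Zf G e K * Zf Hs 0 K := by
  obtain ⟨hstack, -⟩ := hHs
  have hsub : ∀ z : Fin n → ZMod 2, Hs.mulVec z = 0 → G.mulVec z = 0 := by
    intro z hz
    funext i
    have h2 : G.mulVec z i = Hs.mulVec z (Sum.inl i) := by
      simp [Matrix.mulVec, dotProduct, hstack i]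
    rw [h2, hz]
    rfl
  have hxdef : Real.exp (-(2*K)) = Real.exp (-(2*K)) := rfl
  set x := Real.exp (-(2*K)) with hxd
  have hx0 : 0 ≤ x := (Real.exp_pos _).le
  have hx1 : x ≤ 1 := Real.exp_le_one_iff.mpr (by linarith)
  have hZ : Zf G e K * Zf Hs 0 K ≤ Zf Hs e K * Zf G 0 K := by
    rw [ZfExpand' G e K x hxd, ZfExpand' Hs e K x hxd,
        ZfExpand' G 0 K x hxd, ZfExpand' Hs 0 K x hxd]
    simp_rw [Xf_zero, mul_one]
    have hcore := core G Hs hsub x hx0 hx1 e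
    have hcpos : (0:ℝ) ≤ (Real.exp K / 2) ^ n * (Real.exp K / 2) ^ n := by positivity
    calc (Real.exp K / 2) ^ n * (∑ z : Fin n → ZMod 2, Wf x z * Xf e z * Tf G z)
          * ((Real.exp K / 2) ^ n * ∑ z : Fin n → ZMod 2, Wf x z * Tf Hs z)
        = ((Real.exp K / 2) ^ n * (Real.exp K / 2) ^ n)
          * ((∑ z : Fin n → ZMod 2, Wf x z * Xf e z * Tf G z)
            * (∑ z : Fin n → ZMod 2, Wf x z * Tf Hs z)) := by ring
      _ ≤ ((Real.exp K / 2) ^ n * (Real.exp K / 2) ^ n)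
          * ((∑ z : Fin n → ZMod 2, Wf x z * Xf e z * Tf Hs z)
            * (∑ z : Fin n → ZMod 2, Wf x z * Tf G z)) :=
          mul_le_mul_of_nonneg_left hcore hcpos
      _ = (Real.exp K / 2) ^ n * (∑ z : Fin n → ZMod 2, Wf x z * Xf e z * Tf Hs z)
          * ((Real.exp K / 2) ^ n * ∑ z : Fin n → ZMod 2, Wf x z * Tf G z) := by ring
  refine ⟨?_, hZ⟩
  have p1 := Zf_pos Hs e K
  have p2 := Zf_pos G e K
  have p3 := Zf_pos Hs 0 K
  have p4 := Zf_pos G 0 K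
  unfold deltaF
  rw [ge_iff_le, sub_le_sub_iff]
  rw [← Real.log_mul (ne_of_gt p1) (ne_of_gt p4), ← Real.log_mul (ne_of_gt p3) (ne_of_gt p2)]
  rw [Real.log_le_log_iff (mul_pos p3 p2) (mul_pos p1 p4)]
  nlinarith [hZ]
end
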